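/- Let R be a regular ring of prime characteristic p, L an ideal, u ∈ R, and set M^{(e)} = (L^[p^e] : u^{ν_e}) where ν_e = 1+p+...+p^{e−1}. Then M^{(e+1)} = ((M^{(e)})^[p] : u) for all e ≥ 0. -/

import Mathlib

/-- The `q`-th Frobenius power of an ideal: the ideal generated by `q`-th powers of its
elements. -/
def fpow {R : Type*} [CommRing R] (q : ℕ) (J : Ideal R) : Ideal R :=
  Ideal.span ((fun a => a ^ q) '' (J : Set R))

/-- `ν_e = 1 + p + ... + p^{e-1}`. -/
def nu (p e : ℕ) : ℕ := ∑ i ∈ Finset.range e, p ^ i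

/-!
In characteristic `p` the Frobenius power `J^[p^e]` is the extension of `J` along the ring
endomorphism `x ↦ x ^ p ^ e`, so `(J^[p^e])^[p] = J^[p^(e+1)]`. Since `ν_{e+1} = p ν_e + 1`,
`(L^[p^(e+1)] : u^ν_{e+1}) = ((L^[p^e])^[p] : (u^ν_e)^p) : u`, and the regularity hypothesis
(for the single Frobenius power `p`) turns the inner colon into `(L^[p^e] : u^ν_e)^[p]`.
-/

theorem Ideal.colon_span_singleton_colon_span_singleton {R : Type*} [CommRing R] (I : Ideal R)
    (a b : R) :
    (I.colon (Ideal.span {a})).colon (Ideal.span {b}) = I.colon (Ideal.span {a * b}) := by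
  ext x
  simp only [Ideal.mem_colon_span_singleton, mul_assoc, mul_comm a b]

section Frobenius

variable {R : Type*} [CommRing R] (p : ℕ) [ExpChar R p]

theorem fpow_pow_eq_map_iterateFrobenius (n : ℕ) (J : Ideal R) :
    fpow (p ^ n) J = J.map (iterateFrobenius R p n) := by
  rw [fpow, Ideal.map]
  rfl

theorem fpow_pow_fpow_pow (m n : ℕ) (J : Ideal R) :
    fpow (p ^ m) (fpow (p ^ n) J) = fpow (p ^ (n + m)) J := by
  simp only [fpow_pow_eq_map_iterateFrobenius, Ideal.map_map, add_comm n m,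
    iterateFrobenius_add]

end Frobenius

theorem nu_succ (p e : ℕ) : nu p (e + 1) = nu p e * p + 1 := by
  rw [nu, nu, geom_sum_succ, mul_comm]

theorem stmt_5 {R : Type*} [CommRing R] (p : ℕ) (hp : p.Prime) [CharP R p]
    (u : R) (L : Ideal R)
    (hreg : ∀ (e : ℕ) (A : Ideal R) (v : R),
      (fpow (p ^ e) A).colon (Ideal.span {v ^ p ^ e}) = fpow (p ^ e) (A.colon (Ideal.span {v}))) :
    ∀ e : ℕ,
      (fpow (p ^ (e + 1)) L).colon (Ideal.span {u ^ nu p (e + 1)}) =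
        (fpow p ((fpow (p ^ e) L).colon (Ideal.span {u ^ nu p e}))).colon (Ideal.span {u}) := by
  intro e
  have := ExpChar.prime (R := R) hp
  have hreg_one := hreg 1 (fpow (p ^ e) L) (u ^ nu p e)
  rw [fpow_pow_fpow_pow, pow_one] at hreg_one
  rw [nu_succ, pow_succ u, pow_mul, ← Ideal.colon_span_singleton_colon_span_singleton, hreg_one]
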